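/- arXiv:1910.13367 — 3 statements merged into one kernel-verified Lean document; each statement's English description precedes it below -/
import Mathlib

section
/- The Toom-Cook method is correct: given r+n−1 distinct nodes x₀,…,x_{r+n−2} in a field, with V the (n+r−1)×(n+r−1) Vandermonde matrix V_{ij} = x_i^j, and polynomials p of degree < r and q of degree < n with coefficient vectors f and g, the coefficient vector of p·q equals V^{−1} applied to the vector of pointwise products (p(x₀)q(x₀), …, p(x_{r+n−2})q(x_{r+n−2})). -/
open Polynomial in
/-- Correctness of the Toom-Cook method: with `R = n+r-1` distinct nodes and the
Vandermonde matrix `V`, the coefficient vector of `p·q` equals `V⁻¹` applied to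
the vector of pointwise products of evaluations at the nodes. -/
theorem toom_cook_correct {F : Type*} [Field F]
    (r n : ℕ) (hr : 0 < r) (hn : 0 < n)
    (x : Fin (n + r - 1) → F) (hx : Function.Injective x)
    (f : Fin r → F) (g : Fin n → F) (p q : Polynomial F)
    (hp : p = ∑ i : Fin r, Polynomial.C (f i) * Polynomial.X ^ (i : ℕ))
    (hq : q = ∑ j : Fin n, Polynomial.C (g j) * Polynomial.X ^ (j : ℕ)) :
    ∀ k : Fin (n + r - 1),
      (p * q).coeff k =
        (Matrix.vandermonde x)⁻¹.mulVec (fun i => p.eval (x i) * q.eval (x i)) k := by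
  have hV : (Matrix.vandermonde x).det ≠ 0 := by
    rw [Matrix.det_vandermonde_ne_zero_iff]; exact hx
  have hpd : p.natDegree ≤ r - 1 := by
    rw [hp]
    apply Polynomial.natDegree_sum_le_of_forall_le
    intro i _
    exact (Polynomial.natDegree_C_mul_X_pow_le _ _).trans (by have := i.isLt; omega)
  have hqd : q.natDegree ≤ n - 1 := by
    rw [hq]
    apply Polynomial.natDegree_sum_le_of_forall_le
    intro i _
    exact (Polynomial.natDegree_C_mul_X_pow_le _ _).trans (by have := i.isLt; omega)
  have hpq : (p * q).natDegree < n + r - 1 := by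
    have := Polynomial.natDegree_mul_le (p := p) (q := q)
    omega
  have key : (Matrix.vandermonde x).mulVec (fun k : Fin (n + r - 1) => (p * q).coeff k)
      = fun i => p.eval (x i) * q.eval (x i) := by
    funext i
    rw [← Polynomial.eval_mul, Polynomial.eval_eq_sum_range' hpq,
      Finset.sum_range (fun k => (p * q).coeff k * x i ^ k)]
    simp [Matrix.mulVec, Matrix.vandermonde, dotProduct, mul_comm]
  intro k
  have h2 := congrArg ((Matrix.vandermonde x)⁻¹.mulVec) key
  rw [Matrix.mulVec_mulVec, Matrix.nonsing_inv_mul _ hV.isUnit, Matrix.one_mulVec] at h2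
  exact congrFun h2 k
end

section
/- Overlap-add correctness: let n = γη, and let f, g ∈ ℝ^n be reshaped (column-wise) into matrices F̃, G̃ ∈ ℝ^{γ×η}. Let Ỹ = F̃ ∗ G̃ ∈ ℝ^{(2γ−1)×(2η−1)} be their 2D linear convolution, and let Q ∈ ℝ^{(2n−1)×(2γ−1)(2η−1)} be the recomposition matrix defined by q_{ij} = 1 iff i = j − (η−1)⌊j/(2η−1)⌋. Then the 1D linear convolution f ∗ g is obtained by applying Q to Ỹ (f ∗ g = vec(Q Ỹ)); equivalently, for all a, b: (f ∗ g)_{aη+b} = Σ_{c,d : cη+d = aη+b} Ỹ_{c,d}, where Ỹ_{c,d} = Σ_{i+u=c} Σ_{j+v=d} f_{iη+j} g_{uη+v}. -/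
open Finset

private lemma ite_sum' {α : Type*} (P : Prop) [Decidable P] (s : Finset α) (t : α → ℝ) :
    (if P then ∑ x ∈ s, t x else (0:ℝ)) = ∑ x ∈ s, if P then t x else 0 := by
  split <;> simp

private lemma sum_range_mul_eq {M : Type*} [AddCommMonoid M] (m n : ℕ) (F : ℕ → M) :
    ∑ i ∈ range (m * n), F i = ∑ i ∈ range m, ∑ j ∈ range n, F (i * n + j) := by
  rw [← Finset.sum_product']
  refine Finset.sum_nbij' (fun i => (i / n, i % n)) (fun p => p.1 * n + p.2) ?_ ?_ ?_ ?_ ?_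
  · intro i hi
    simp only [mem_range] at hi
    have hn : 0 < n := by
      rcases Nat.eq_zero_or_pos n with h | h
      · simp [h] at hi
      · exact h
    simp only [mem_product, mem_range]
    exact ⟨(Nat.div_lt_iff_lt_mul hn).2 hi, Nat.mod_lt _ hn⟩
  · intro p hp
    simp only [mem_product, mem_range] at hp
    simp only [mem_range]
    calc p.1 * n + p.2 < p.1 * n + n := by omega
      _ = (p.1 + 1) * n := by ring
      _ ≤ m * n := Nat.mul_le_mul_right n (by omega)
  · intro i _
    exact Nat.div_add_mod' i n
  · intro p hp
    simp only [mem_product, mem_range] at hp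
    have hn : 0 < n := by omega
    have h1 : (p.1 * n + p.2) / n = p.1 := by
      rw [mul_comm, Nat.mul_add_div hn, Nat.div_eq_of_lt hp.2, add_zero]
    have h2 : (p.1 * n + p.2) % n = p.2 := by
      rw [mul_comm, Nat.mul_add_mod, Nat.mod_eq_of_lt hp.2]
    simp [h1, h2]
  · intro i _
    rw [Nat.div_add_mod']

private lemma pull2 (A C D : Finset ℕ) (t : ℕ → ℕ → ℕ → ℝ) :
    ∑ c ∈ A, ∑ i ∈ C, ∑ u ∈ D, t c i u = ∑ i ∈ C, ∑ u ∈ D, ∑ c ∈ A, t c i u := by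
  rw [Finset.sum_comm]
  exact Finset.sum_congr rfl fun i _ => Finset.sum_comm

private lemma pull3 (A C D E : Finset ℕ) (t : ℕ → ℕ → ℕ → ℕ → ℝ) :
    ∑ c ∈ A, ∑ i ∈ C, ∑ u ∈ D, ∑ j ∈ E, t c i u j
      = ∑ i ∈ C, ∑ u ∈ D, ∑ j ∈ E, ∑ c ∈ A, t c i u j := by
  rw [Finset.sum_comm]
  exact Finset.sum_congr rfl fun i _ => pull2 A D E fun c u j => t c i u j

private lemma pull4 (A C D E F : Finset ℕ) (t : ℕ → ℕ → ℕ → ℕ → ℕ → ℝ) :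
    ∑ c ∈ A, ∑ i ∈ C, ∑ u ∈ D, ∑ j ∈ E, ∑ v ∈ F, t c i u j v
      = ∑ i ∈ C, ∑ u ∈ D, ∑ j ∈ E, ∑ v ∈ F, ∑ c ∈ A, t c i u j v := by
  rw [Finset.sum_comm]
  exact Finset.sum_congr rfl fun i _ => pull3 A D E F fun c u j v => t c i u j v

/-- Overlap-add correctness: a 1D linear convolution of length `γη` is
recovered from the 2D linear convolution of the reshaped inputs by summing the
entries `Ỹ_{c,d}` with `cη + d = k`. -/
theorem overlap_add_correct (γ η : ℕ) (hγ : 0 < γ) (hη : 0 < η) (f g : ℕ → ℝ)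
    (Y : ℕ → ℕ → ℝ)
    (hY : ∀ c d, Y c d =
      ∑ i ∈ Finset.range γ, ∑ u ∈ Finset.range γ,
        ∑ j ∈ Finset.range η, ∑ v ∈ Finset.range η,
          if i + u = c ∧ j + v = d then f (i * η + j) * g (u * η + v) else 0) :
    ∀ k < 2 * (γ * η) - 1,
      (∑ i ∈ Finset.range (γ * η), ∑ j ∈ Finset.range (γ * η),
        if i + j = k then f i * g j else 0) =
      ∑ c ∈ Finset.range (2 * γ - 1), ∑ d ∈ Finset.range (2 * η - 1),
        if c * η + d = k then Y c d else 0 := by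
  intro k hk
  classical
  have hR : (∑ c ∈ Finset.range (2 * γ - 1), ∑ d ∈ Finset.range (2 * η - 1),
        if c * η + d = k then Y c d else 0) =
      ∑ i ∈ range γ, ∑ u ∈ range γ, ∑ j ∈ range η, ∑ v ∈ range η,
        if (i + u) * η + (j + v) = k then f (i * η + j) * g (u * η + v) else 0 := by
    simp only [hY, ite_sum', ← ite_and]
    refine Eq.trans (Finset.sum_congr rfl fun c _ => pull4 _ _ _ _ _
      (fun d i u j v => if c * η + d = k ∧ i + u = c ∧ j + v = d
        then f (i * η + j) * g (u * η + v) else 0)) ?_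
    refine Eq.trans (pull4 _ _ _ _ _ _) ?_
    refine sum_congr rfl fun i hi => sum_congr rfl fun u hu => sum_congr rfl fun j hj =>
      sum_congr rfl fun v hv => ?_
    simp only [mem_range] at hi hu hj hv
    rw [Finset.sum_eq_single_of_mem (i + u) (by simp only [mem_range]; omega)]
    · rw [Finset.sum_eq_single_of_mem (j + v) (by simp only [mem_range]; omega)]
      · simp
      · intro d _ hd
        exact if_neg fun h => hd h.2.2.symm
    · intro c _ hc
      apply Finset.sum_eq_zero
      intro d _
      exact if_neg fun h => hc h.2.1.symm
  have hL : (∑ i ∈ Finset.range (γ * η), ∑ j ∈ Finset.range (γ * η),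
        if i + j = k then f i * g j else 0) =
      ∑ i ∈ range γ, ∑ j ∈ range η, ∑ u ∈ range γ, ∑ v ∈ range η,
        if (i * η + j) + (u * η + v) = k then f (i * η + j) * g (u * η + v) else 0 := by
    rw [sum_range_mul_eq γ η]
    refine sum_congr rfl fun i _ => sum_congr rfl fun j _ => ?_
    rw [sum_range_mul_eq γ η]
  rw [hL, hR]
  refine sum_congr rfl fun i _ => ?_
  rw [Finset.sum_comm]
  refine sum_congr rfl fun u _ => sum_congr rfl fun j _ => sum_congr rfl fun v _ => ?_
  rw [show (i + u) * η + (j + v) = (i * η + j) + (u * η + v) from by ring]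
end

section
/- Agarwal-Cooley index decomposition: let n = n₁n₂ with gcd(n₁,n₂) = 1, and let e₁ = n₂m₂, e₂ = n₁m₁ where n₁m₁ + n₂m₂ ≡ 1 (mod n). Then the map (k₁, k₂) ↦ (e₁k₁ + e₂k₂) mod n is a bijection from ℤ_{n₁} × ℤ_{n₂} to ℤ_n, and under this bijection the cyclic convolution y_k = Σ_{i=0}^{n−1} f_i g_{(k−i) mod n} becomes the 2D cyclic convolution ỹ_{k₁k₂} = Σ_{i₁=0}^{n₁−1} Σ_{i₂=0}^{n₂−1} f̃_{i₁i₂} g̃_{(k₁−i₁) mod n₁, (k₂−i₂) mod n₂}, with x̃_{a,b} := x_{(e₁a+e₂b) mod n}. -/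
/-- Agarwal-Cooley index decomposition: for coprime `n₁, n₂` with Bézout
coefficients `n₁m₁ + n₂m₂ = 1` and `e₁ = n₂m₂`, `e₂ = n₁m₁`, the map
`(k₁,k₂) ↦ e₁k₁ + e₂k₂ (mod n₁n₂)` is a bijection, and under it the 1D cyclic
convolution becomes a 2D cyclic convolution. -/
theorem agarwal_cooley_decomposition (n₁ n₂ : ℕ) [NeZero n₁] [NeZero n₂]
    (hcop : Nat.Coprime n₁ n₂) (m₁ m₂ : ℤ)
    (hBezout : (n₁ : ℤ) * m₁ + (n₂ : ℤ) * m₂ = 1)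
    (φ : ZMod n₁ × ZMod n₂ → ZMod (n₁ * n₂))
    (hφ : ∀ p : ZMod n₁ × ZMod n₂,
      φ p = (((n₂ : ℤ) * m₂ : ℤ) : ZMod (n₁ * n₂)) * (p.1.val : ZMod (n₁ * n₂)) +
            (((n₁ : ℤ) * m₁ : ℤ) : ZMod (n₁ * n₂)) * (p.2.val : ZMod (n₁ * n₂))) :
    Function.Bijective φ ∧
    ∀ (f g : ZMod (n₁ * n₂) → ℝ) (k₁ : ZMod n₁) (k₂ : ZMod n₂),
      (∑ i : ZMod (n₁ * n₂), f i * g (φ (k₁, k₂) - i)) =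
        ∑ i₁ : ZMod n₁, ∑ i₂ : ZMod n₂,
          f (φ (i₁, i₂)) * g (φ (k₁ - i₁, k₂ - i₂)) := by
  haveI : NeZero (n₁ * n₂) := ⟨Nat.mul_ne_zero (NeZero.ne n₁) (NeZero.ne n₂)⟩
  set ψ : ZMod (n₁ * n₂) → ZMod n₁ × ZMod n₂ := fun x =>
    (ZMod.castHom (dvd_mul_right n₁ n₂) (ZMod n₁) x,
     ZMod.castHom (dvd_mul_left n₂ n₁) (ZMod n₂) x) with hψ
  have h1 : (((n₂ : ℤ) * m₂ : ℤ) : ZMod n₁) = 1 := by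
    have : ((n₂ : ℤ) * m₂) = 1 - (n₁ : ℤ) * m₁ := by linarith
    rw [this]; push_cast; simp
  have h2 : (((n₁ : ℤ) * m₁ : ℤ) : ZMod n₂) = 1 := by
    have : ((n₁ : ℤ) * m₁) = 1 - (n₂ : ℤ) * m₂ := by linarith
    rw [this]; push_cast; simp
  have hψφ : ∀ p, ψ (φ p) = p := by
    intro p
    rw [hφ]
    simp only [hψ, map_add, map_mul, map_intCast, map_natCast]
    rw [h1, h2]
    push_cast
    simp [ZMod.natCast_val]
  have hinj : Function.Injective φ := by
    intro a b h
    have := congrArg ψ h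
    rwa [hψφ, hψφ] at this
  have hbij : Function.Bijective φ := by
    rw [Fintype.bijective_iff_injective_and_card]
    exact ⟨hinj, by simp⟩
  have hψinj : Function.Injective ψ := by
    intro x y h
    obtain ⟨a, rfl⟩ := hbij.surjective x
    obtain ⟨b, rfl⟩ := hbij.surjective y
    rw [hψφ, hψφ] at h
    rw [h]
  have hψadd : ∀ x y, ψ (x + y) = ψ x + ψ y := by
    intro x y; simp only [hψ]; exact Prod.ext (map_add _ x y) (map_add _ x y)
  have hadd : ∀ a b, φ (a + b) = φ a + φ b := by
    intro a b
    apply hψinj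
    rw [hψφ, hψadd, hψφ, hψφ]
  have hsub : ∀ a b, φ (a - b) = φ a - φ b := by
    intro a b
    have := hadd (a - b) b
    simp at this
    rw [this]; ring
  refine ⟨hbij, fun f g k₁ k₂ => ?_⟩
  rw [← hbij.sum_comp (fun i => f i * g (φ (k₁, k₂) - i))]
  rw [Fintype.sum_prod_type]
  refine Finset.sum_congr rfl fun i₁ _ => Finset.sum_congr rfl fun i₂ _ => ?_
  congr 1
  rw [← hsub]
  rfl
end
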